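/- arXiv:2406.06794 — 2 statements merged into one kernel-verified Lean document; each statement's English description precedes it below -/
import Mathlib

section
/- Green's function bounds for the 1D band model (first part of Lemma B.1): Fix integers W ≥ 1 and r ≥ 1, fix ξ ∈ ℤ, and let B_r(ξ) = { x ∈ ℤ : |x−ξ| ≤ rW }. Define the matrix −Δ_W^{B_r} on ℝ^{B_r(ξ)} by (−Δ_W^{B_r} f)(x) = 2W·f(x) − Σ_{y∈B_r(ξ): 0<|x−y|≤W} f(y). Then −Δ_W^{B_r} is symmetric positive definite, and its inverse G_r = (−Δ_W^{B_r})^{-1} satisfies, for every x ∈ B_r(ξ): (1/(2W³))·(rW + 1 − |x−ξ|) ≤ G_r(ξ,x) ≤ (1/W²)·(W + rW − |x−ξ|). -/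
/-!
On `B` the matrix `-Δ_W^B` acts as the whole-line operator
`(-Δ_W f)(x) = ∑_{d=1}^{W} (2 f(x) - f(x+d) - f(x-d))` applied to the extension of `f` by
zero. At the rightmost minimum of a function that takes a negative value all these second
differences are `≤ 0` and the one with `d = 1` is `< 0`. This yields the maximum principle
`-Δ_W^B u ≥ 0 → u ≥ 0`, and it excludes eigenvectors with eigenvalue `≤ 0`, so the symmetric
matrix `-Δ_W^B` is positive definite.

The Green function `G_r(ξ, ·)` solves `-Δ_W^B G = δ_ξ`, and the maximum principle compares it
with tents `b (a - |y - ξ|)`. The Laplacian of a tent is `2b ∑_{d=1}^{W} (d - |y - ξ|)⁺`: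
`b W (W + 1)` at `ξ`, at most `b (W² - W)` at the other points within distance `W` of `ξ`,
and `0` beyond. With `b = W⁻²` the tent is a supersolution, and `a = W + rW` keeps it `≥ 0`
within distance `W` of `B_r(ξ)`. With `b = (2W³)⁻¹` it becomes a subsolution after adding a
spike of height `b (W² - W)` at `ξ`: the spike's Laplacian `-b (W² - W)` at the other points
outweighs the tent's, and at `ξ` the total `b (2W³ - W² + W)` stays `≤ 1`; `a = rW + 1` makes
this barrier `≤ 0` outside `B_r(ξ)`.
-/

namespace Band1D

/-- The ball `B_r(ξ) = {x : |x - ξ| ≤ rW}` in the band graph `Γ_{1,W}`. -/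
noncomputable def bandBall (ξ : ℤ) (r W : ℕ) : Finset ℤ :=
  Finset.Icc (ξ - (r * W : ℕ)) (ξ + (r * W : ℕ))

/-- The (negative) Dirichlet Laplacian `-Δ_W^{B_r}` of the 1D band graph on `B_r(ξ)`,
as a matrix: `2W` on the diagonal and `-1` at `(x,y)` with `0 < |x-y| ≤ W`. -/
def bandMat (ξ : ℤ) (r W : ℕ) : Matrix (bandBall ξ r W) (bandBall ξ r W) ℝ :=
  fun x y =>
    (if (x : ℤ) = (y : ℤ) then (2 * W : ℝ) else 0) -
      (if 0 < |(x : ℤ) - (y : ℤ)| ∧ |(x : ℤ) - (y : ℤ)| ≤ (W : ℤ) then 1 else 0)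

/-- The center `ξ` as an element of `B_r(ξ)`. -/
def bandCtr (ξ : ℤ) (r W : ℕ) : (bandBall ξ r W : Finset ℤ) :=
  ⟨ξ, by simp only [bandBall, Finset.mem_Icc]; omega⟩

open Finset Matrix

def bandKernel (W : ℕ) (x y : ℤ) : ℝ :=
  (if x = y then (2 * W : ℝ) else 0) - (if 0 < |x - y| ∧ |x - y| ≤ (W : ℤ) then 1 else 0)

/-- `-Δ_W^B` for an arbitrary finite `B ⊆ ℤ`; `bandMat ξ r W` is
`dirichletLap W (bandBall ξ r W)` by definition. -/
def dirichletLap (W : ℕ) (B : Finset ℤ) : Matrix B B ℝ := fun x y => bandKernel W x y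

lemma bandKernel_comm (W : ℕ) (x y : ℤ) : bandKernel W x y = bandKernel W y x := by
  simp only [bandKernel, abs_sub_comm x y, eq_comm]

lemma bandKernel_of_ne {W : ℕ} {x y : ℤ} (h : x ≠ y) :
    bandKernel W x y = -(if |x - y| ≤ (W : ℤ) then 1 else 0) := by
  simp [bandKernel, h, sub_ne_zero.2 h]

lemma dirichletLap_isSymm (W : ℕ) (B : Finset ℤ) : (dirichletLap W B).IsSymm :=
  IsSymm.ext fun x y => bandKernel_comm W y x

noncomputable def bandLap (W : ℕ) : (ℤ → ℝ) →ₗ[ℝ] ℤ → ℝ where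
  toFun f x := ∑ d ∈ Icc (1 : ℤ) W, (2 * f x - f (x + d) - f (x - d))
  map_add' f g := by
    ext x
    simp only [Pi.add_apply, ← sum_add_distrib]
    exact sum_congr rfl fun _ _ => by ring
  map_smul' c f := by
    ext x
    simp only [Pi.smul_apply, smul_eq_mul, RingHom.id_apply, mul_sum]
    exact sum_congr rfl fun _ _ => by ring

lemma bandLap_apply (W : ℕ) (f : ℤ → ℝ) (x : ℤ) :
    bandLap W f x = ∑ d ∈ Icc (1 : ℤ) W, (2 * f x - f (x + d) - f (x - d)) := rfl

lemma bandLap_single (W : ℕ) (x y : ℤ) : bandLap W (Pi.single y 1) x = bandKernel W x y := by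
  have hcard : #(Icc (1 : ℤ) W) = W := by simp
  simp only [bandLap_apply, Pi.single_apply, sum_sub_distrib, sum_const, hcard, nsmul_eq_mul,
    bandKernel]
  have h₁ : ∀ d : ℤ, (x + d = y ↔ d = y - x) := fun d => by omega
  have h₂ : ∀ d : ℤ, (x - d = y ↔ d = x - y) := fun d => by omega
  simp only [h₁, h₂, sum_ite_eq', mem_Icc]
  rcases abs_cases (x - y) with ⟨habs, _⟩ | ⟨habs, _⟩ <;> rw [habs] <;> split_ifs <;>
    first | (exfalso; omega) | ring

lemma bandLap_le_bandLap_of_le {W : ℕ} {f g : ℤ → ℝ} {x : ℤ} (hx : f x = g x)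
    (hfg : ∀ y, |y - x| ≤ W → f y ≤ g y) : bandLap W g x ≤ bandLap W f x := by
  rw [bandLap_apply, bandLap_apply]
  refine sum_le_sum fun d hd => ?_
  rw [mem_Icc] at hd
  have h₁ := hfg (x + d) (abs_le.2 ⟨by omega, by omega⟩)
  have h₂ := hfg (x - d) (abs_le.2 ⟨by omega, by omega⟩)
  rw [hx]
  linarith

lemma _root_.Finset.indicator_eq_sum_smul_single {α R : Type*} [DecidableEq α] [Semiring R]
    (s : Finset α) (g : α → R) :
    (s : Set α).indicator g = ∑ y : s, g y • Pi.single (y : α) 1 := by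
  ext z
  rw [Finset.sum_apply, Finset.sum_coe_sort s (fun y => (g y • Pi.single y (1 : R)) z)]
  simp [Pi.single_apply, Set.indicator_apply]

lemma dirichletLap_mulVec (W : ℕ) (B : Finset ℤ) (g : ℤ → ℝ) (x : B) :
    (dirichletLap W B *ᵥ fun y => g y) x = bandLap W ((B : Set ℤ).indicator g) x := by
  simp only [indicator_eq_sum_smul_single, map_sum, map_smul, Finset.sum_apply, Pi.smul_apply,
    bandLap_single, Matrix.mulVec, dotProduct, dirichletLap, smul_eq_mul, mul_comm]

section MaximumPrinciple

variable {W : ℕ} (hW : 1 ≤ W)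
include hW

lemma bandLap_neg_of_forall_le {f : ℤ → ℝ} {x : ℤ} (hmin : ∀ y, f x ≤ f y)
    (hlt : f x < f (x + 1)) : bandLap W f x < 0 := by
  rw [bandLap_apply]
  refine (sum_lt_sum (g := fun _ => (0 : ℝ)) (fun d _ => ?_) ⟨1, ?_, ?_⟩).trans_eq
    sum_const_zero
  · linarith [hmin (x + d), hmin (x - d)]
  · simpa using hW
  · linarith [hmin (x - 1)]

lemma exists_neg_mulVec_neg {B : Finset ℤ} {w : B → ℝ} (hw : ∃ x, w x < 0) :
    ∃ x, w x < 0 ∧ (dirichletLap W B *ᵥ w) x < 0 := by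
  classical
  set f : ℤ → ℝ := fun y => if hy : y ∈ B then w ⟨y, hy⟩ else 0
  have hfw : w = fun y : B => f y := by ext y; simp [f]
  have hf : (B : Set ℤ).indicator f = f :=
    Set.indicator_eq_self.2 <| Function.support_subset_iff'.2 fun y hy => by
      simp [f, Finset.mem_coe.not.1 hy]
  obtain ⟨x, hx⟩ := hw
  obtain ⟨m, hmB, hm⟩ := B.exists_min_image f ⟨x, x.2⟩
  set S := B.filter (fun y => f y = f m)
  have hS : S.Nonempty := ⟨m, mem_filter.2 ⟨hmB, rfl⟩⟩
  obtain ⟨hx₀B, hx₀m⟩ := mem_filter.1 (S.max'_mem hS)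
  set x₀ := S.max' hS
  have hneg : f x₀ < 0 := by
    have := hm x x.2
    rw [hfw] at hx
    linarith
  have hmin : ∀ y, f x₀ ≤ f y := by
    intro y
    by_cases hy : y ∈ B
    · exact hx₀m ▸ hm y hy
    · simp only [f, hy, dite_false]; exact hneg.le
  have hlt : f x₀ < f (x₀ + 1) := by
    by_cases h : x₀ + 1 ∈ B
    · refine (hmin _).lt_of_ne fun heq => ?_
      have := S.le_max' (x₀ + 1) (mem_filter.2 ⟨h, heq ▸ hx₀m⟩)
      omega
    · simpa [f, h] using hneg
  refine ⟨⟨x₀, hx₀B⟩, by simpa [f, hx₀B] using hneg, ?_⟩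
  rw [hfw, dirichletLap_mulVec, hf]
  exact bandLap_neg_of_forall_le hW hmin hlt

lemma nonneg_of_mulVec_nonneg {B : Finset ℤ} {w : B → ℝ} (h : 0 ≤ dirichletLap W B *ᵥ w) :
    0 ≤ w := by
  intro x
  by_contra! hx
  obtain ⟨y, -, hy⟩ := exists_neg_mulVec_neg hW ⟨x, hx⟩
  exact (h y).not_gt hy

lemma le_of_mulVec_le {B : Finset ℤ} {u v : B → ℝ}
    (h : dirichletLap W B *ᵥ u ≤ dirichletLap W B *ᵥ v) : u ≤ v :=
  sub_nonneg.1 <| nonneg_of_mulVec_nonneg hW <| by rw [mulVec_sub]; exact sub_nonneg.2 h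

lemma pos_of_mulVec_eq_smul {B : Finset ℤ} {v : B → ℝ} {μ : ℝ}
    (hv : dirichletLap W B *ᵥ v = μ • v) (hv0 : v ≠ 0) : 0 < μ := by
  by_contra! hμ
  obtain ⟨x, hx⟩ : ∃ x, v x ≠ 0 := Function.ne_iff.1 hv0
  rcases hx.lt_or_gt with hneg | hpos
  · obtain ⟨y, hy, hLy⟩ := exists_neg_mulVec_neg hW ⟨x, hneg⟩
    rw [hv, Pi.smul_apply, smul_eq_mul] at hLy
    nlinarith
  · obtain ⟨y, hy, hLy⟩ := exists_neg_mulVec_neg hW (w := -v) ⟨x, by simpa using hpos⟩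
    rw [mulVec_neg, hv] at hLy
    simp only [Pi.neg_apply, Pi.smul_apply, smul_eq_mul] at hy hLy
    nlinarith

lemma dirichletLap_posDef (B : Finset ℤ) : (dirichletLap W B).PosDef := by
  classical
  have hL := isHermitian_iff_isSymm.2 (dirichletLap_isSymm W B)
  refine hL.posDef_iff_eigenvalues_pos.2 fun j => pos_of_mulVec_eq_smul hW
    (hL.mulVec_eigenvectorBasis j) fun h => hL.eigenvectorBasis.orthonormal.ne_zero j ?_
  ext x
  exact congrFun h x

end MaximumPrinciple

lemma two_mul_sum_Icc_one (W : ℕ) : 2 * ∑ d ∈ Icc (1 : ℤ) W, d = W * (W + 1) := by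
  induction W with
  | zero => simp
  | succ W ih =>
    push_cast
    rw [← insert_Icc_right_eq_Icc_add_one (by omega), sum_insert (by simp), mul_add, ih]
    ring

noncomputable def excessSum (W : ℕ) (k : ℤ) : ℤ := ∑ d ∈ Icc (1 : ℤ) W, max (d - k) 0

lemma two_mul_excessSum_zero (W : ℕ) : 2 * excessSum W 0 = W * (W + 1) := by
  rw [excessSum, ← two_mul_sum_Icc_one]
  congr 1
  exact sum_congr rfl fun d hd => by rw [mem_Icc] at hd; omega

lemma excessSum_nonneg (W : ℕ) (k : ℤ) : 0 ≤ excessSum W k :=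
  sum_nonneg fun _ _ => le_max_right _ _

lemma two_mul_excessSum_le (W : ℕ) {k : ℤ} (hk : 1 ≤ k) :
    2 * excessSum W k ≤ W * W - W := by
  have h : excessSum W k ≤ ∑ d ∈ Icc (1 : ℤ) W, (d - 1) :=
    sum_le_sum fun d hd => by rw [mem_Icc] at hd; omega
  rw [sum_sub_distrib, sum_const, Int.card_Icc] at h
  have := two_mul_sum_Icc_one W
  simp only [add_sub_cancel_right, Int.toNat_natCast, nsmul_eq_mul, mul_one] at h
  nlinarith

lemma excessSum_eq_zero {W : ℕ} {k : ℤ} (hk : W ≤ k) : excessSum W k = 0 :=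
  sum_eq_zero fun d hd => by rw [mem_Icc] at hd; omega

noncomputable def tent (ξ : ℤ) (a b : ℝ) (y : ℤ) : ℝ := b * (a - (|y - ξ| : ℤ))

lemma bandLap_tent (W : ℕ) (ξ : ℤ) (a b : ℝ) (x : ℤ) :
    bandLap W (tent ξ a b) x = 2 * b * excessSum W |x - ξ| := by
  have hterm : ∀ d ∈ Icc (1 : ℤ) W,
      2 * tent ξ a b x - tent ξ a b (x + d) - tent ξ a b (x - d)
        = 2 * b * (max (d - |x - ξ|) 0 : ℤ) := by
    intro d hd
    rw [mem_Icc] at hd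
    have h : |x + d - ξ| + |x - d - ξ| - 2 * |x - ξ| = 2 * max (d - |x - ξ|) 0 := by
      rw [Int.abs_eq_natAbs, Int.abs_eq_natAbs, Int.abs_eq_natAbs]; omega
    have h' : ((|x + d - ξ| : ℤ) : ℝ) + (|x - d - ξ| : ℤ) - 2 * (|x - ξ| : ℤ)
        = 2 * (max (d - |x - ξ|) 0 : ℤ) := by exact_mod_cast h
    simp only [tent]
    linear_combination b * h'
  rw [bandLap_apply, sum_congr rfl hterm, ← mul_sum, excessSum, Int.cast_sum]

noncomputable def spikedTent (W : ℕ) (ξ : ℤ) (a : ℝ) : ℤ → ℝ :=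
  tent ξ a (1 / (2 * (W : ℝ) ^ 3)) + (1 / (2 * (W : ℝ) ^ 3) * (W ^ 2 - W)) • Pi.single ξ 1

section Barriers

variable {W : ℕ} (hW : 1 ≤ W) (ξ : ℤ) (a : ℝ) (x : ℤ)
include hW

lemma tent_le_spikedTent : tent ξ a (1 / (2 * (W : ℝ) ^ 3)) x ≤ spikedTent W ξ a x := by
  have hW' : (1 : ℝ) ≤ W := by exact_mod_cast hW
  have hs : 0 ≤ 1 / (2 * (W : ℝ) ^ 3) * (W ^ 2 - W) := mul_nonneg (by positivity) (by nlinarith)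
  exact le_add_of_nonneg_right (smul_nonneg hs (by rw [Pi.single_apply]; positivity))

lemma single_le_bandLap_tent :
    (Pi.single ξ 1 : ℤ → ℝ) x ≤ bandLap W (tent ξ a (1 / (W : ℝ) ^ 2)) x := by
  have hW' : (1 : ℝ) ≤ W := by exact_mod_cast hW
  rw [bandLap_tent, Pi.single_apply]
  split_ifs with hx
  · have h : (2 : ℝ) * (excessSum W 0 : ℤ) = W * (W + 1) := by
      exact_mod_cast two_mul_excessSum_zero W
    rw [hx, sub_self, abs_zero]
    field_simp
    nlinarith
  · have : (0 : ℝ) ≤ (excessSum W |x - ξ| : ℤ) := by exact_mod_cast excessSum_nonneg W _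
    positivity

lemma bandLap_spikedTent_le_single :
    bandLap W (spikedTent W ξ a) x ≤ (Pi.single ξ 1 : ℤ → ℝ) x := by
  have hW' : (1 : ℝ) ≤ W := by exact_mod_cast hW
  rw [spikedTent, map_add, map_smul, Pi.add_apply, Pi.smul_apply, bandLap_single, bandLap_tent,
    Pi.single_apply, smul_eq_mul]
  split_ifs with hx
  · have h : (2 : ℝ) * (excessSum W 0 : ℤ) = W * (W + 1) := by
      exact_mod_cast two_mul_excessSum_zero W
    simp only [hx, sub_self, abs_zero, bandKernel, if_true, lt_irrefl, false_and, if_false]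
    field_simp
    nlinarith
  · have hz : 1 ≤ |x - ξ| := Int.one_le_abs (sub_ne_zero.2 hx)
    rw [bandKernel_of_ne hx]
    split_ifs with hxW
    · have h : (2 : ℝ) * (excessSum W |x - ξ| : ℤ) ≤ W * W - W := by
        exact_mod_cast two_mul_excessSum_le W hz
      field_simp
      nlinarith
    · rw [excessSum_eq_zero (by omega)]
      simp

end Barriers

lemma mem_bandBall {ξ y : ℤ} {r W : ℕ} :
    y ∈ bandBall ξ r W ↔ |y - ξ| ≤ (r * W : ℕ) := by
  rw [bandBall, mem_Icc, abs_sub_le_iff]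
  omega

section BallBarriers

variable {W : ℕ} (hW : 1 ≤ W) {ξ : ℤ} {r : ℕ} (x : bandBall ξ r W)
include hW

lemma single_le_mulVec_tent :
    (Pi.single ξ 1 : ℤ → ℝ) x ≤ (dirichletLap W (bandBall ξ r W) *ᵥ
      fun y => tent ξ (W + (r * W : ℕ)) (1 / (W : ℝ) ^ 2) y) x := by
  rw [dirichletLap_mulVec]
  refine (single_le_bandLap_tent hW ξ _ x).trans
    (bandLap_le_bandLap_of_le (Set.indicator_of_mem x.2 _) fun y hy => ?_)
  by_cases hyB : y ∈ bandBall ξ r W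
  · rw [Set.indicator_of_mem hyB]
  · have hyξ : |y - ξ| ≤ W + (r * W : ℕ) :=
      (abs_sub_le y x ξ).trans (add_le_add hy (mem_bandBall.1 x.2))
    have : ((|y - ξ| : ℤ) : ℝ) ≤ W + (r * W : ℕ) := by exact_mod_cast hyξ
    rw [Set.indicator_of_notMem hyB, tent]
    exact mul_nonneg (by positivity) (sub_nonneg.2 this)

lemma mulVec_spikedTent_le_single :
    (dirichletLap W (bandBall ξ r W) *ᵥ fun y => spikedTent W ξ ((r * W : ℕ) + 1) y) x
      ≤ (Pi.single ξ 1 : ℤ → ℝ) x := by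
  rw [dirichletLap_mulVec]
  refine (bandLap_le_bandLap_of_le (Set.indicator_of_mem x.2 _).symm fun y _ => ?_).trans
    (bandLap_spikedTent_le_single hW ξ _ x)
  by_cases hyB : y ∈ bandBall ξ r W
  · rw [Set.indicator_of_mem hyB]
  · have hyξ : y ≠ ξ := fun h => hyB (h ▸ (bandCtr ξ r W).2)
    have : (r * W : ℕ) + 1 ≤ |y - ξ| := by rw [mem_bandBall] at hyB; omega
    have : ((r * W : ℕ) : ℝ) + 1 ≤ ((|y - ξ| : ℤ) : ℝ) := by exact_mod_cast this
    rw [Set.indicator_of_notMem hyB, spikedTent, Pi.add_apply, Pi.smul_apply,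
      Pi.single_eq_of_ne hyξ, smul_zero, add_zero, tent]
    exact mul_nonpos_of_nonneg_of_nonpos (by positivity) (by linarith)

end BallBarriers

lemma _root_.Matrix.IsSymm.mulVec_inv_row {n R : Type*} [Fintype n] [DecidableEq n] [CommRing R]
    {M : Matrix n n R} (hM : M.IsSymm) (h : IsUnit M.det) (i : n) :
    M *ᵥ M⁻¹ i = Pi.single i 1 := by
  calc M *ᵥ M⁻¹ i = M⁻¹ i ᵥ* M := by rw [← mulVec_transpose, hM.eq]
    _ = Pi.single i 1 ᵥ* (M⁻¹ * M) := by rw [← vecMul_vecMul, single_one_vecMul]; rfl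
    _ = Pi.single i 1 := by rw [nonsing_inv_mul _ h, vecMul_one]

lemma single_bandCtr_apply (ξ : ℤ) (r W : ℕ) (x : bandBall ξ r W) :
    (Pi.single (bandCtr ξ r W) 1 : bandBall ξ r W → ℝ) x =
      (Pi.single ξ 1 : ℤ → ℝ) x := by
  simp only [Pi.single_apply, Subtype.ext_iff]
  rfl

theorem band1d_green_general (W r : ℕ) (hW : 1 ≤ W) (ξ : ℤ) :
    (bandMat ξ r W).PosDef ∧
      ∀ x : (bandBall ξ r W : Finset ℤ),
        1 / (2 * (W : ℝ) ^ 3) * ((r * W : ℕ) + 1 - (|(x : ℤ) - ξ| : ℤ)) ≤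
            (bandMat ξ r W)⁻¹ (bandCtr ξ r W) x ∧
          (bandMat ξ r W)⁻¹ (bandCtr ξ r W) x ≤
            1 / (W : ℝ) ^ 2 * ((W : ℝ) + (r * W : ℕ) - (|(x : ℤ) - ξ| : ℤ)) := by
  change (dirichletLap W (bandBall ξ r W)).PosDef ∧ _
  set L := dirichletLap W (bandBall ξ r W)
  have hpd : L.PosDef := dirichletLap_posDef hW _
  have hG : ∀ x, (L *ᵥ L⁻¹ (bandCtr ξ r W)) x = (Pi.single ξ 1 : ℤ → ℝ) x := by
    intro x
    rw [(dirichletLap_isSymm W _).mulVec_inv_row hpd.det_pos.ne'.isUnit, single_bandCtr_apply]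
  refine ⟨hpd, fun x => ⟨?_, ?_⟩⟩
  · exact (tent_le_spikedTent hW ξ _ x).trans <| le_of_mulVec_le hW
      (fun y => (mulVec_spikedTent_le_single hW y).trans_eq (hG y).symm) x
  · exact le_of_mulVec_le hW (fun y => (hG y).trans_le (single_le_mulVec_tent hW y)) x

/-- **Green's function bounds for the 1D band model** (first part of Lemma B.1):
`-Δ_W^{B_r}` is symmetric positive definite and its inverse `G_r` satisfies
`(2W³)⁻¹ (rW + 1 - |x-ξ|) ≤ G_r(ξ,x) ≤ W⁻² (W + rW - |x-ξ|)` for `x ∈ B_r(ξ)`. -/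
theorem band1d_green (W r : ℕ) (hW : 1 ≤ W) (hr : 1 ≤ r) (ξ : ℤ) :
    (bandMat ξ r W).PosDef ∧
      ∀ x : (bandBall ξ r W : Finset ℤ),
        1 / (2 * (W : ℝ) ^ 3) * ((r * W : ℕ) + 1 - (|(x : ℤ) - ξ| : ℤ)) ≤
            (bandMat ξ r W)⁻¹ (bandCtr ξ r W) x ∧
          (bandMat ξ r W)⁻¹ (bandCtr ξ r W) x ≤
            1 / (W : ℝ) ^ 2 * ((W : ℝ) + (r * W : ℕ) - (|(x : ℤ) - ξ| : ℤ)) :=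
  band1d_green_general W r hW ξ

end Band1D
end

section
/- Poincaré inequality with Dirichlet boundary condition (Lemma C.3, conditional form): Let Γ be a locally finite connected graph, x₀ ∈ 𝕍, R ≥ 1, and suppose B_R = B(x₀,R) is finite and nonempty. Suppose the Dirichlet Laplacian −Δ^{B_R} is invertible and that u₀ = (−Δ^{B_R})^{-1}𝟙 satisfies u₀(x) ≤ κ for all x ∈ B_R, for some κ > 0. Then for every f: 𝕍 → ℝ vanishing at every vertex outside B_R: Σ_{x∈B_R} f(x)² ≤ κ·Σ_{x∈B_R} Σ_{y: y∼x} (f(y)−f(x))². -/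
open scoped BigOperators

namespace LandscapeGraph

variable {V : Type*}

/-- Ball of real radius `r` with respect to the shortest-path graph metric. -/
def gball (G : SimpleGraph V) (x : V) (r : ℝ) : Set V :=
  {y | G.Reachable x y ∧ (G.dist x y : ℝ) ≤ r}

/-- The degree of a vertex, as a real number. -/
noncomputable def ndeg (G : SimpleGraph V) (x : V) : ℝ := ((G.neighborSet x).ncard : ℝ)

/-- The graph Laplacian `Δf(x) = Σ_{y∼x} (f(y) - f(x))`. -/
noncomputable def lap (G : SimpleGraph V) (f : V → ℝ) (x : V) : ℝ :=
  ∑ᶠ y ∈ G.neighborSet x, (f y - f x)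

/-- Volume control (Ahlfors `α`-regularity) with parameters `(α, cL, cU)`. -/
def VolCtrl (G : SimpleGraph V) (α cL cU : ℝ) : Prop :=
  ∀ x : V, ∀ r : ℝ, 1 ≤ r →
    cL * r ^ α ≤ ((gball G x r).ncard : ℝ) ∧ ((gball G x r).ncard : ℝ) ≤ cU * r ^ α

/-- Degree-weighted average of `f` over a set `S`. -/
noncomputable def wavg (G : SimpleGraph V) (S : Set V) (f : V → ℝ) : ℝ :=
  (∑ᶠ z ∈ S, f z * ndeg G z) / ∑ᶠ z ∈ S, ndeg G z

/-- The Dirichlet-type energy `Σ_{z,w∈S, z∼w} (f z - f w)²` (over ordered pairs). -/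
noncomputable def pairEnergy (G : SimpleGraph V) (S : Set V) (f : V → ℝ) : ℝ :=
  ∑ᶠ z ∈ S, ∑ᶠ w ∈ {w ∈ S | G.Adj z w}, (f z - f w) ^ 2

/-- The weak Poincaré inequality with constants `(CP, lam)`. -/
def WeakPI (G : SimpleGraph V) (CP lam : ℝ) : Prop :=
  ∀ x : V, ∀ r : ℝ, 1 ≤ r → ∀ f : V → ℝ,
    (∑ᶠ z ∈ gball G x r, (f z - wavg G (gball G x r) f) ^ 2) ≤
      CP * r ^ 2 * pairEnergy G (gball G x (lam * r)) f

/-- The Dirichlet restriction `H^A` of the Jacobi operator, acting on functions. -/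
noncomputable def HAop (G : SimpleGraph V) (μ : V → V → ℝ) (Vpot : V → ℝ) (A : Set V)
    (f : V → ℝ) (x : V) : ℝ :=
  ndeg G x * f x - (∑ᶠ y ∈ {y ∈ A | G.Adj x y}, μ x y * f y) + Vpot x * f x

/-- Symmetric bond weights with values in `[0,1]`. -/
def BondWeights (G : SimpleGraph V) (μ : V → V → ℝ) : Prop :=
  ∀ x y, G.Adj x y → μ x y = μ y x ∧ 0 ≤ μ x y ∧ μ x y ≤ 1

/-- `u` is the landscape function of `H^A`: positive on `A` and solving `H^A u = 1` on `A`. -/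
def IsLandscape (G : SimpleGraph V) (μ : V → V → ℝ) (Vpot : V → ℝ) (A : Finset V)
    (u : V → ℝ) : Prop :=
  (∀ x ∈ A, 0 < u x) ∧ ∀ x ∈ A, HAop G μ Vpot (↑A) u x = 1

open Classical in
/-- The Dirichlet restriction `H^A` as a matrix indexed by `A`. -/
noncomputable def HAmat (G : SimpleGraph V) (μ : V → V → ℝ) (Vpot : V → ℝ) (A : Finset V) :
    Matrix A A ℝ := fun x y =>
  (if (x : V) = (y : V) then ndeg G (x : V) + Vpot (x : V) else 0) -
    (if G.Adj (x : V) (y : V) then μ (x : V) (y : V) else 0)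

open Classical in
/-- The integrated density of states: number of eigenvalues `≤ E` (with multiplicity),
divided by `|A|`. -/
noncomputable def NA {A : Finset V} {M : Matrix A A ℝ} (hM : M.IsHermitian) (E : ℝ) : ℝ :=
  ((Finset.univ.filter fun i => hM.eigenvalues i ≤ E).card : ℝ) / (A.card : ℝ)

/-- `Z` is the set of centers of a covering of `𝕍` by balls of radius `R`
with finite overlap constant `b`. -/
def IsCover (G : SimpleGraph V) (Z : Set V) (R b : ℝ) : Prop :=
  (∀ y : V, ∃ z ∈ Z, y ∈ gball G z R) ∧
    ∀ y : V, (({z ∈ Z | y ∈ gball G z R}).ncard : ℝ) ≤ b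

/-- The landscape counting function `N_u^{𝒫,A}(E)` for the cover with centers `Z` and radius `R`:
the number of balls `B` of the cover with `min_{x ∈ B∩A} 1/u(x) ≤ E`, divided by `|A|`. -/
noncomputable def Nu (G : SimpleGraph V) (u : V → ℝ) (A : Finset V) (Z : Set V) (R E : ℝ) : ℝ :=
  (({z ∈ Z | ∃ x ∈ A, x ∈ gball G z R ∧ 1 / u x ≤ E}).ncard : ℝ) / (A.card : ℝ)

/-- The diameter of a finite set of vertices in the graph metric. -/
noncomputable def diamA (G : SimpleGraph V) (A : Finset V) : ℝ :=
  ((A.sup fun x => A.sup fun y => G.dist x y : ℕ) : ℝ)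

/-- `A` has sufficient overlap with balls, with constant `cA`. -/
def SuffOverlap (G : SimpleGraph V) (A : Finset V) (α cA : ℝ) : Prop :=
  ∀ x ∈ A, ∀ r : ℝ, 1 ≤ r → r ≤ 4 * diamA G A →
    cA * r ^ α ≤ (((↑A : Set V) ∩ gball G x r).ncard : ℝ)

/-- The Dirichlet Laplacian `-Δ^B` of a region `B`, acting on functions:
`(-Δ^B f)(x) = deg(x) f(x) - Σ_{y ∈ B, y ∼ x} f(y)`. -/
noncomputable def negDirLap (G : SimpleGraph V) (B : Set V) (f : V → ℝ) (x : V) : ℝ :=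
  ndeg G x * f x - ∑ᶠ y ∈ {y ∈ B | G.Adj x y}, f y

/-- Exterior (vertex) boundary of a set. -/
def extBoundary (G : SimpleGraph V) (S : Set V) : Set V :=
  {x | x ∉ S ∧ ∃ y ∈ S, G.Adj x y}

/-- Ball with respect to an abstract metric `d`. -/
def dball (d : V → V → ℝ) (ξ : V) (R : ℝ) : Set V := {y | d ξ y ≤ R}

/-- The harmonic weight assumption: a metric `d` strongly equivalent (constant `c`) to the
graph metric, together with harmonic weights `h ξ R : B^d(ξ,R) → [0,1]` satisfying the
submean property for subharmonic functions (with equality for harmonic ones), and a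
uniform lower bound `c' / |B^d(ξ,R)|` off `bad' sets `X ξ R` of asymptotically
negligible proportion. -/
structure HarmonicWeight (G : SimpleGraph V) (d : V → V → ℝ) (h : V → ℝ → V → ℝ)
    (X : V → ℝ → Set V) (c c' : ℝ) : Prop where
  c_one : 1 ≤ c
  c'_pos : 0 < c'
  d_self : ∀ x, d x x = 0
  d_eq_zero : ∀ x y, d x y = 0 → x = y
  d_symm : ∀ x y, d x y = d y x
  d_triangle : ∀ x y z, d x z ≤ d x y + d y z
  d_lower : ∀ x y, c⁻¹ * (G.dist x y : ℝ) ≤ d x y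
  d_upper : ∀ x y, d x y ≤ c * (G.dist x y : ℝ)
  h_mem : ∀ ξ (R : ℝ) y, y ∈ dball d ξ R → h ξ R y ∈ Set.Icc (0 : ℝ) 1
  submean : ∀ ξ (R : ℝ), 0 < R → ∀ f : V → ℝ,
    (∀ x ∈ dball d ξ R ∪ extBoundary G (dball d ξ R), 0 ≤ lap G f x) →
    f ξ ≤ ∑ᶠ y ∈ dball d ξ R, h ξ R y * f y
  harm_eq : ∀ ξ (R : ℝ), 0 < R → ∀ f : V → ℝ,
    (∀ x ∈ dball d ξ R ∪ extBoundary G (dball d ξ R), lap G f x = 0) →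
    f ξ = ∑ᶠ y ∈ dball d ξ R, h ξ R y * f y
  X_subset : ∀ ξ (R : ℝ), X ξ R ⊆ dball d ξ R
  h_lower : ∀ ξ (R : ℝ), ∀ y ∈ dball d ξ R \ X ξ R,
    c' / ((dball d ξ R).ncard : ℝ) ≤ h ξ R y
  X_small : ∀ ε : ℝ, 0 < ε → ∃ R₀ : ℝ, ∀ R : ℝ, R₀ ≤ R → ∀ ξ : V,
    ((X ξ R).ncard : ℝ) ≤ ε * ((dball d ξ R).ncard : ℝ)

/-!
Write `f = g u` with `u` the landscape of `B`, extended by `0` off `B`; the maximum principle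
makes `u > 0` on `B`. Then `Σ f² ≤ κ Σ g² u = κ Σ g² u (-Δ^B u)`, and after symmetrising over
edges the discrete Picone inequality `g(x)² u(x) (u(x) - u(y)) + g(y)² u(y) (u(y) - u(x)) ≤
(f(x) - f(y))²` bounds the right-hand side by `κ` times the energy of `f`.
-/

open Finset

theorem sq_mul_mul_sub_add_le_sq_sub {a b s t : ℝ} (ha : 0 ≤ a) (hb : 0 ≤ b) :
    s ^ 2 * a * (a - b) + t ^ 2 * b * (b - a) ≤ (t * b - s * a) ^ 2 := by
  nlinarith [mul_nonneg (mul_nonneg ha hb) (sq_nonneg (s - t))]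

section LocallyFinite

variable (G : SimpleGraph V) [G.LocallyFinite]

theorem finsum_mem_neighborSet (φ : V → ℝ) (x : V) :
    ∑ᶠ y ∈ G.neighborSet x, φ y = ∑ y ∈ G.neighborFinset x, φ y := by
  rw [← G.coe_neighborFinset, finsum_mem_coe_finset]

theorem ndeg_eq_degree (x : V) : ndeg G x = G.degree x := by
  rw [ndeg, Set.ncard_eq_toFinset_card', ← G.neighborFinset_def, G.card_neighborFinset_eq_degree]

theorem negDirLap_eq_sum_indicator {S : Set V} {x : V} (hx : x ∈ S) (u : V → ℝ) :
    negDirLap G S u x = ∑ y ∈ G.neighborFinset x, (S.indicator u x - S.indicator u y) := by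
  classical
  have hsum : ∑ᶠ y ∈ {y ∈ S | G.Adj x y}, u y = ∑ y ∈ G.neighborFinset x, S.indicator u y := by
    rw [finsum_cond_eq_sum_of_cond_iff (t := {y ∈ G.neighborFinset x | y ∈ S}) _
      fun {y} _ => by simp [and_comm], sum_filter]
    rfl
  rw [negDirLap, hsum, sum_sub_distrib, sum_const, nsmul_eq_mul, Set.indicator_of_mem hx,
    ndeg_eq_degree, G.card_neighborFinset_eq_degree]

theorem pos_of_negDirLap_eq_one {S : Finset V} {u : V → ℝ}
    (hu : ∀ x ∈ S, negDirLap G S u x = 1) : ∀ x ∈ S, 0 < u x := by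
  intro x hx
  by_contra! hux
  obtain ⟨m, hm, hmin⟩ := S.exists_min_image u ⟨x, hx⟩
  have hnonpos : negDirLap G S u m ≤ 0 := by
    rw [negDirLap_eq_sum_indicator G (mem_coe.2 hm)]
    refine sum_nonpos fun y _ => ?_
    by_cases hy : y ∈ S
    · simp [hm, hy, hmin y hy]
    · simp [hm, hy, (hmin x hx).trans hux]
  linarith [hu m hm]

theorem sum_sum_filter_neighborFinset_comm [DecidableEq V] (S : Finset V) (Φ : V → V → ℝ) :
    ∑ x ∈ S, ∑ y ∈ G.neighborFinset x with y ∈ S, Φ x y =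
      ∑ x ∈ S, ∑ y ∈ G.neighborFinset x with y ∈ S, Φ y x :=
  sum_comm' fun x y => by simp only [mem_filter, G.mem_neighborFinset, G.adj_comm]; tauto

theorem sum_sum_neighborFinset_le_energy {S : Finset V} {F : V → V → ℝ} {f : V → ℝ}
    (hF : ∀ x ∉ S, ∀ y, F x y = 0)
    (hFf : ∀ x y, G.Adj x y → F x y + F y x ≤ (f y - f x) ^ 2) :
    ∑ x ∈ S, ∑ y ∈ G.neighborFinset x, F x y ≤
      ∑ x ∈ S, ∑ y ∈ G.neighborFinset x, (f y - f x) ^ 2 := by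
  classical
  have hsplit (φ : V → V → ℝ) : ∑ x ∈ S, ∑ y ∈ G.neighborFinset x, φ x y =
      ∑ x ∈ S, ∑ y ∈ G.neighborFinset x with y ∈ S, φ x y +
        ∑ x ∈ S, ∑ y ∈ G.neighborFinset x with y ∉ S, φ x y := by
    rw [← sum_add_distrib]
    exact sum_congr rfl fun x _ => (sum_filter_add_sum_filter_not _ _ _).symm
  rw [hsplit F, hsplit fun x y => (f y - f x) ^ 2]
  have hinside : 2 * ∑ x ∈ S, ∑ y ∈ G.neighborFinset x with y ∈ S, F x y ≤
      ∑ x ∈ S, ∑ y ∈ G.neighborFinset x with y ∈ S, (f y - f x) ^ 2 := by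
    calc 2 * ∑ x ∈ S, ∑ y ∈ G.neighborFinset x with y ∈ S, F x y
        = ∑ x ∈ S, ∑ y ∈ G.neighborFinset x with y ∈ S, (F x y + F y x) := by
          rw [two_mul]
          nth_rw 2 [sum_sum_filter_neighborFinset_comm]
          simp only [← sum_add_distrib]
      _ ≤ _ := sum_le_sum fun x _ => sum_le_sum fun y hy =>
          hFf x y ((G.mem_neighborFinset _ _).1 (mem_filter.1 hy).1)
  have henergy : 0 ≤ ∑ x ∈ S, ∑ y ∈ G.neighborFinset x with y ∈ S, (f y - f x) ^ 2 :=
    sum_nonneg fun _ _ => sum_nonneg fun _ _ => sq_nonneg _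
  have houtside : ∑ x ∈ S, ∑ y ∈ G.neighborFinset x with y ∉ S, F x y ≤
      ∑ x ∈ S, ∑ y ∈ G.neighborFinset x with y ∉ S, (f y - f x) ^ 2 := by
    refine sum_le_sum fun x _ => sum_le_sum fun y hy => ?_
    obtain ⟨hxy, hyS⟩ := mem_filter.1 hy
    simpa [hF y hyS] using hFf x y ((G.mem_neighborFinset _ _).1 hxy)
  linarith

theorem sum_sq_le_mul_energy_of_negDirLap_eq_one {S : Finset V} {u f : V → ℝ} {κ : ℝ}
    (hκ : 0 ≤ κ) (hu : ∀ x ∈ S, negDirLap G S u x = 1) (hbd : ∀ x ∈ S, u x ≤ κ)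
    (hf : ∀ x ∉ S, f x = 0) :
    ∑ x ∈ S, f x ^ 2 ≤ κ * ∑ x ∈ S, ∑ y ∈ G.neighborFinset x, (f y - f x) ^ 2 := by
  set ũ := (S : Set V).indicator u
  have hpos := pos_of_negDirLap_eq_one G hu
  have hũ_nonneg (x : V) : 0 ≤ ũ x := Set.indicator_nonneg (fun x hx => (hpos x hx).le) x
  set g := fun x => f x / ũ x
  have hfg (x : V) : f x = g x * ũ x := by
    by_cases hx : x ∈ S
    · simp [g, ũ, hx, (hpos x hx).ne']
    · simp [g, ũ, hx, hf x hx]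
  calc ∑ x ∈ S, f x ^ 2 ≤ κ * ∑ x ∈ S, g x ^ 2 * ũ x := by
        rw [mul_sum]
        refine sum_le_sum fun x hx => ?_
        have hũx : ũ x ≤ κ := by simpa [ũ, hx] using hbd x hx
        rw [hfg x]
        nlinarith [mul_le_mul_of_nonneg_left hũx (mul_nonneg (sq_nonneg (g x)) (hũ_nonneg x))]
    _ = κ * ∑ x ∈ S, ∑ y ∈ G.neighborFinset x, g x ^ 2 * ũ x * (ũ x - ũ y) := by
        congr 1
        refine sum_congr rfl fun x hx => ?_
        rw [← mul_sum, ← negDirLap_eq_sum_indicator G (mem_coe.2 hx), hu x hx, mul_one]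
    _ ≤ κ * ∑ x ∈ S, ∑ y ∈ G.neighborFinset x, (f y - f x) ^ 2 := by
        refine mul_le_mul_of_nonneg_left (sum_sum_neighborFinset_le_energy G ?_ ?_) hκ
        · intro x hx y
          simp [ũ, hx]
        · intro x y _
          rw [hfg x, hfg y]
          exact sq_mul_mul_sub_add_le_sq_sub (hũ_nonneg x) (hũ_nonneg y)

end LocallyFinite

theorem dirichlet_poincare_general
    {V : Type*}
    (G : SimpleGraph V) (hlf : ∀ x : V, (G.neighborSet x).Finite)
    (x₀ : V) (R : ℝ)
    (hfin : (gball G x₀ R).Finite)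
    (κ : ℝ) (hκ : 0 < κ)
    (u₀ : V → ℝ)
    (hu₀ : ∀ x ∈ gball G x₀ R, negDirLap G (gball G x₀ R) u₀ x = 1)
    (hbd : ∀ x ∈ gball G x₀ R, u₀ x ≤ κ) :
    ∀ f : V → ℝ, (∀ x, x ∉ gball G x₀ R → f x = 0) →
      (∑ᶠ x ∈ gball G x₀ R, f x ^ 2) ≤
        κ * ∑ᶠ x ∈ gball G x₀ R, ∑ᶠ y ∈ G.neighborSet x, (f y - f x) ^ 2 := by
  let _ : G.LocallyFinite := fun x => (hlf x).fintype
  intro f hf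
  rw [← hfin.coe_toFinset] at hu₀ hbd hf ⊢
  simp only [finsum_mem_coe_finset, finsum_mem_neighborSet]
  exact sum_sq_le_mul_energy_of_negDirLap_eq_one G hκ.le hu₀ hbd fun x hx => hf x hx

/-- **Poincaré inequality with Dirichlet boundary condition** (Lemma C.3, conditional form).
If the Dirichlet Laplacian of the finite ball `B_R = B(x₀,R)` is invertible (trivial kernel)
and its landscape `u₀ = (-Δ^{B_R})⁻¹𝟙` is bounded by `κ` on `B_R`, then every `f` vanishing
outside `B_R` satisfies `Σ_{B_R} f² ≤ κ Σ_{x∈B_R} Σ_{y∼x} (f(y)-f(x))²`. -/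
theorem dirichlet_poincare
    {V : Type*}
    (G : SimpleGraph V) (hconn : G.Connected) (hlf : ∀ x : V, (G.neighborSet x).Finite)
    (x₀ : V) (R : ℝ) (hR : 1 ≤ R)
    (hfin : (gball G x₀ R).Finite) (hne : (gball G x₀ R).Nonempty)
    (κ : ℝ) (hκ : 0 < κ)
    (hker : ∀ w : V → ℝ,
      (∀ x ∈ gball G x₀ R, negDirLap G (gball G x₀ R) w x = 0) →
      ∀ x ∈ gball G x₀ R, w x = 0)
    (u₀ : V → ℝ)
    (hu₀ : ∀ x ∈ gball G x₀ R, negDirLap G (gball G x₀ R) u₀ x = 1)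
    (hbd : ∀ x ∈ gball G x₀ R, u₀ x ≤ κ) :
    ∀ f : V → ℝ, (∀ x, x ∉ gball G x₀ R → f x = 0) →
      (∑ᶠ x ∈ gball G x₀ R, f x ^ 2) ≤
        κ * ∑ᶠ x ∈ gball G x₀ R, ∑ᶠ y ∈ G.neighborSet x, (f y - f x) ^ 2 :=
  dirichlet_poincare_general G hlf x₀ R hfin κ hκ u₀ hu₀ hbd

end LandscapeGraph
end
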